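/- arXiv:2202.05100 — 4 statements merged into one kernel-verified Lean document; each statement's English description precedes it below -/
import Mathlib

section
/- For any sequence of actions A_1,...,A_T taking values in a finite set 𝒜, define N_t(a) = max(1, Σ_{s=1}^t 1{A_s = a}). Then for any 1 ≤ t < t' ≤ T, Σ_{s=t}^{t'} 1/√(N_{s-1}(A_s)) ≤ √(8|𝒜|(t'−t)). -/
/-!
Group the rounds of the window by action. If `a` is played `n` times in the window, its `i`-th
play there is preceded by at least `i - 1` plays of `a` since round `1`, so its terms add up to
at most `∑_{k ≤ n} 1 / √(max 1 (k - 1)) ≤ √(4n - 3) ≤ 2√n`, the middle bound by telescoping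
against `√(4k - 3)`. Cauchy–Schwarz over the actions turns `∑_a 2√n_a` into
`2√(|𝒜| (t' - t + 1)) ≤ √(8 |𝒜| (t' - t))`.
-/

open Finset

lemma Real.sqrt_four_mul_sub_three_add_one_div_sqrt_le {x : ℝ} (hx : 3 / 4 ≤ x) :
    √(4 * x - 3) + 1 / √x ≤ √(4 * x + 1) := by
  have hx0 : 0 < √x := Real.sqrt_pos.2 (by linarith)
  have hu : √(4 * x - 3) ^ 2 = 4 * x - 3 := Real.sq_sqrt (by linarith)
  have hv : √x ^ 2 = x := Real.sq_sqrt (by linarith)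
  have hw : √(4 * x + 1) ^ 2 = 4 * x + 1 := Real.sq_sqrt (by linarith)
  have huv : √(4 * x - 3) * √x ≤ 2 * x - 1 / 2 := by
    have : (√(4 * x - 3) * √x) ^ 2 = (4 * x - 3) * x := by rw [mul_pow, hu, hv]
    nlinarith [sq_nonneg (√(4 * x - 3) * √x - (2 * x - 1 / 2))]
  have key : √(4 * x - 3) * √x + 1 ≤ √(4 * x + 1) * √x := by
    refine (pow_le_pow_iff_left₀ (by positivity) (by positivity) two_ne_zero).1 ?_
    rw [mul_pow √(4 * x + 1), hw, hv]
    nlinarith [Real.sqrt_nonneg (4 * x - 3)]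
  calc √(4 * x - 3) + 1 / √x = (√(4 * x - 3) * √x + 1) / √x := by field_simp
    _ ≤ √(4 * x + 1) * √x / √x := by gcongr
    _ = √(4 * x + 1) := by field_simp

lemma sum_Icc_one_div_sqrt_max_one_sub_one_le (n : ℕ) (hn : 1 ≤ n) :
    ∑ k ∈ Icc 1 n, 1 / √((max 1 (k - 1) : ℕ) : ℝ) ≤ √(4 * n - 3) := by
  induction n, hn using Nat.le_induction with
  | base => norm_num
  | succ n hn ih =>
    rw [sum_Icc_succ_top (by omega), show max 1 (n + 1 - 1) = n by omega]
    have hstep := Real.sqrt_four_mul_sub_three_add_one_div_sqrt_le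
      (x := n) ((by norm_num : (3 / 4 : ℝ) ≤ 1).trans (Nat.one_le_cast.2 hn))
    rw [show 4 * ((n + 1 : ℕ) : ℝ) - 3 = 4 * n + 1 by push_cast; ring]
    linarith

lemma sum_Icc_one_div_sqrt_max_one_sub_one_le_two_mul_sqrt (n : ℕ) :
    ∑ k ∈ Icc 1 n, 1 / √((max 1 (k - 1) : ℕ) : ℝ) ≤ 2 * √n := by
  rcases Nat.eq_zero_or_pos n with rfl | hn
  · simp
  calc _ ≤ √(4 * n - 3) := sum_Icc_one_div_sqrt_max_one_sub_one_le n hn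
    _ ≤ √(4 * n) := Real.sqrt_le_sqrt (by linarith)
    _ = 2 * √n := by rw [Real.sqrt_mul' _ n.cast_nonneg, show (4 : ℝ) = 2 ^ 2 by norm_num,
      Real.sqrt_sq zero_le_two]

lemma Real.sum_sqrt_le_sqrt_card_mul_sum {ι : Type*} (s : Finset ι) {f : ι → ℝ}
    (hf : ∀ i, 0 ≤ f i) : ∑ i ∈ s, √(f i) ≤ √(#s * ∑ i ∈ s, f i) := by
  simpa [Real.sqrt_mul (Nat.cast_nonneg _)] using
    Real.sum_sqrt_mul_sqrt_le s (fun _ ↦ zero_le_one) hf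

theorem Finset.sum_card_filter_le_eq {ι M : Type*} [LinearOrder ι] [AddCommMonoid M]
    (S : Finset ι) (f : ℕ → M) : ∑ s ∈ S, f #{x ∈ S | x ≤ s} = ∑ k ∈ Icc 1 #S, f k := by
  have hmono : StrictMonoOn (fun s ↦ #{x ∈ S | x ≤ s}) S := by
    intro s _ s' hs' hlt
    refine card_lt_card ((ssubset_iff_of_subset ?_).2 ⟨s', ?_, ?_⟩)
    · exact monotone_filter_right _ fun _ _ hx ↦ hx.trans hlt.le
    · exact mem_filter.2 ⟨hs', le_rfl⟩
    · simp [hlt]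
  have himage : S.image (fun s ↦ #{x ∈ S | x ≤ s}) = Icc 1 #S := by
    refine eq_of_subset_of_card_le (fun k hk ↦ ?_) ?_
    · obtain ⟨s, hs, rfl⟩ := mem_image.1 hk
      exact mem_Icc.2 ⟨card_pos.2 ⟨s, by simp [hs]⟩, card_filter_le _ _⟩
    · rw [card_image_of_injOn hmono.injOn, Nat.card_Icc, Nat.add_sub_cancel]
  rw [← himage, sum_image hmono.injOn]

lemma card_filter_le_le_card_filter_Icc_add_one {p : ℕ → Prop} [DecidablePred p] {W : Finset ℕ}
    (hW : ∀ x ∈ W, 1 ≤ x ∧ p x) (s : ℕ) :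
    #{x ∈ W | x ≤ s} ≤ #{j ∈ Icc 1 (s - 1) | p j} + 1 :=
  calc _ ≤ #(insert s {j ∈ Icc 1 (s - 1) | p j}) := card_le_card fun x hx ↦ by
        obtain ⟨hxW, hxs⟩ := mem_filter.1 hx
        obtain ⟨hx1, hpx⟩ := hW x hxW
        rcases hxs.eq_or_lt with rfl | hlt
        · exact mem_insert_self _ _
        · exact mem_insert_of_mem (mem_filter.2 ⟨mem_Icc.2 ⟨hx1, by omega⟩, hpx⟩)
    _ ≤ _ := card_insert_le _ _

lemma sum_one_div_sqrt_max_one_card_filter_Icc_le {p : ℕ → Prop} [DecidablePred p]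
    (W : Finset ℕ) (hW : ∀ x ∈ W, 1 ≤ x ∧ p x) :
    ∑ s ∈ W, 1 / √((max 1 (#{j ∈ Icc 1 (s - 1) | p j}) : ℕ) : ℝ) ≤ 2 * √(#W : ℝ) :=
  calc _ ≤ ∑ s ∈ W, 1 / √((max 1 (#{x ∈ W | x ≤ s} - 1) : ℕ) : ℝ) := by
        refine sum_le_sum fun s _ ↦ ?_
        have := card_filter_le_le_card_filter_Icc_add_one hW s
        gcongr
        omega
    _ = ∑ k ∈ Icc 1 #W, 1 / √((max 1 (k - 1) : ℕ) : ℝ) :=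
        sum_card_filter_le_eq W fun k ↦ 1 / √((max 1 (k - 1) : ℕ) : ℝ)
    _ ≤ 2 * √(#W : ℝ) := sum_Icc_one_div_sqrt_max_one_sub_one_le_two_mul_sqrt _

theorem accumulated_actions_general {α : Type*} [Fintype α] [DecidableEq α]
    (A : ℕ → α) (N : ℕ → α → ℕ)
    (hN : ∀ s a, N s a = max 1 (∑ j ∈ Finset.Icc 1 s, if A j = a then 1 else 0))
    (t t' : ℕ) (ht : 1 ≤ t) (htt' : t < t') :
    ∑ s ∈ Finset.Icc t t', (1 : ℝ) / Real.sqrt (N (s - 1) (A s)) ≤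
      Real.sqrt (8 * (Fintype.card α : ℝ) * ((t' : ℝ) - (t : ℝ))) := by
  set S := Icc t t'
  have h_action (a : α) :
      ∑ s ∈ S with A s = a, 1 / √(N (s - 1) (A s) : ℝ) ≤ 2 * √(#{s ∈ S | A s = a} : ℝ) := by
    refine le_of_eq_of_le (sum_congr rfl fun s hs ↦ ?_)
      (sum_one_div_sqrt_max_one_card_filter_Icc_le _ fun x hx ↦
        ⟨ht.trans (mem_Icc.1 (mem_filter.1 hx).1).1, (mem_filter.1 hx).2⟩)
    rw [(mem_filter.1 hs).2, hN, card_filter]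
  have h_card : ∑ a, (#{s ∈ S | A s = a} : ℝ) = t' - t + 1 := by
    rw [← Nat.cast_sum, ← card_eq_sum_card_fiberwise fun s _ ↦ mem_univ (A s), Nat.card_Icc,
      Nat.cast_sub (by omega : t ≤ t' + 1)]
    push_cast
    ring
  calc ∑ s ∈ S, 1 / √(N (s - 1) (A s) : ℝ)
      = ∑ a, ∑ s ∈ S with A s = a, 1 / √(N (s - 1) (A s) : ℝ) := (sum_fiberwise S A _).symm
    _ ≤ 2 * ∑ a, √(#{s ∈ S | A s = a} : ℝ) := by
        rw [mul_sum]
        exact sum_le_sum fun a _ ↦ h_action a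
    _ ≤ 2 * √(Fintype.card α * (t' - t + 1)) := by
        grw [Real.sum_sqrt_le_sqrt_card_mul_sum univ fun a ↦ Nat.cast_nonneg _, h_card,
          card_univ]
    _ ≤ √(8 * Fintype.card α * (t' - t)) := by
        have hd : (1 : ℝ) ≤ t' - t := by
          have : (t : ℝ) + 1 ≤ t' := by exact_mod_cast htt'
          linarith
        rw [Real.le_sqrt (by positivity) (by positivity), mul_pow, Real.sq_sqrt (by positivity)]
        nlinarith [(Fintype.card α).cast_nonneg (α := ℝ)]

/-- Accumulated action-count bound: for actions `A_s` in a finite set with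
counts `N_s a = max 1 (#{s' ≤ s : A_{s'} = a})`, the sum of inverse square-root
counts over a window is at most `√(8|𝒜|(t'−t))`. -/
theorem accumulated_actions {α : Type*} [Fintype α] [DecidableEq α]
    (T : ℕ) (A : ℕ → α) (N : ℕ → α → ℕ)
    (hN : ∀ s a, N s a = max 1 (∑ j ∈ Finset.Icc 1 s, if A j = a then 1 else 0))
    (t t' : ℕ) (ht : 1 ≤ t) (htt' : t < t') (ht' : t' ≤ T) :
    ∑ s ∈ Finset.Icc t t', (1 : ℝ) / Real.sqrt (N (s - 1) (A s)) ≤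
      Real.sqrt (8 * (Fintype.card α : ℝ) * ((t' : ℝ) - (t : ℝ))) :=
  accumulated_actions_general A N hN t t' ht htt'
end

section
/- Let p be a probability distribution on a finite set Z and p̂_n the empirical (MLE) distribution from an i.i.d. sample X_1,...,X_n from p, i.e., p̂_n(z) = (1/n)Σ_{t=1}^n 1{X_t = z}. For any ε, δ > 0, if n ≥ max(|Z|/ε², (2/ε²)·log(2/δ)), then P[ (1/2)Σ_{z∈Z} |p̂_n(z) − p(z)| > ε ] ≤ δ. -/
/-! The half-ℓ¹ distance between two probability vectors on `Z` is the largest gap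
`p̂(A) - p(A)` over subsets `A ⊆ Z`, attained at `A = {z | p z ≤ p̂ z}`. For a fixed `A`,
`n • p̂(A)` is a sum of `n` independent indicators of mean `p(A)`, so Hoeffding's inequality
bounds `P[p̂(A) - p(A) ≥ ε]` by `exp(-2nε²)`. A union bound over the `2^|Z|` subsets gives
`2^|Z| exp(-2nε²)`, which is at most `δ` once `nε² ≥ |Z|` and `nε² ≥ 2 log(2/δ)`. -/

open MeasureTheory ProbabilityTheory Finset Real

lemma measureReal_sum_indicator_sub_ge_le {Ω α : Type*} [MeasurableSpace Ω] [MeasurableSpace α]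
    {μ : Measure Ω} [IsProbabilityMeasure μ] {X : ℕ → Ω → α} (hmeas : ∀ t, Measurable (X t))
    (hindep : iIndepFun X μ) {S : Set α} (hS : MeasurableSet S) {q : ℝ}
    (hq : ∀ t, μ.real (X t ⁻¹' S) = q) (n : ℕ) {ε : ℝ} (hε : 0 ≤ ε) :
    μ.real {ω | n * ε ≤ ∑ t ∈ range n, (S.indicator 1 (X t ω) - q)} ≤ exp (-2 * n * ε ^ 2) := by
  have hind_meas : Measurable (S.indicator (1 : α → ℝ)) := measurable_const.indicator hS
  have hmean : ∀ t, μ[S.indicator (1 : α → ℝ) ∘ X t] = q := fun t ↦ by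
    rw [← hq t, ← integral_indicator_one ((hmeas t) hS)]
    rfl
  have hsubG : ∀ t < n, HasSubgaussianMGF (fun ω ↦ S.indicator 1 (X t ω) - q) (1 / 4) μ := by
    intro t _
    have := hasSubgaussianMGF_of_mem_Icc (μ := μ) (a := 0) (b := 1)
      (hind_meas.comp (hmeas t)).aemeasurable
      (ae_of_all _ fun ω ↦ ?_)
    · convert this using 2
      · rw [hmean, Function.comp_apply]
      · ext; norm_num
    · exact ⟨Set.indicator_nonneg (fun _ _ ↦ zero_le_one) _,
        Set.indicator_le_self' (fun _ _ ↦ zero_le_one) _⟩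
  have := HasSubgaussianMGF.measure_sum_range_ge_le_of_iIndepFun
    (hindep.comp (fun _ x ↦ S.indicator 1 x - q) fun _ ↦ hind_meas.sub_const q) hsubG
    (by positivity : 0 ≤ (n : ℝ) * ε)
  refine this.trans_eq (congrArg exp ?_)
  rcases n.eq_zero_or_pos with rfl | hn
  · simp
  · field_simp
    push_cast
    ring

lemma sum_filter_nonneg_eq_half_sum_abs {ι : Type*} (s : Finset ι) (d : ι → ℝ)
    (hd : ∑ i ∈ s, d i = 0) :
    ∑ i ∈ s with 0 ≤ d i, d i = (1 / 2) * ∑ i ∈ s, |d i| := by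
  have habs : ∀ i, |d i| = 2 * (if 0 ≤ d i then d i else 0) - d i := fun i ↦ by
    split_ifs with h
    · rw [abs_of_nonneg h]; ring
    · rw [abs_of_neg (not_le.1 h)]; ring
  rw [sum_filter, sum_congr rfl fun i _ ↦ habs i, sum_sub_distrib, ← mul_sum, hd]
  ring

section Empirical

variable {Z : Type*} [DecidableEq Z]

noncomputable def empiricalFreq (x : ℕ → Z) (n : ℕ) (z : Z) : ℝ :=
  (1 / (n : ℝ)) * ∑ t ∈ range n, if x t = z then 1 else 0

lemma sum_empiricalFreq_finset (x : ℕ → Z) (n : ℕ) (A : Finset Z) :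
    ∑ z ∈ A, empiricalFreq x n z =
      (1 / (n : ℝ)) * ∑ t ∈ range n, (A : Set Z).indicator 1 (x t) := by
  simp only [empiricalFreq, ← mul_sum]
  rw [sum_comm]
  simp [sum_ite_eq, Set.indicator_apply]

lemma sum_empiricalFreq [Fintype Z] (x : ℕ → Z) {n : ℕ} (hn : n ≠ 0) :
    ∑ z, empiricalFreq x n z = 1 := by
  simp [sum_empiricalFreq_finset, hn]

lemma exists_finset_mul_le_sum_indicator_sub [Fintype Z] {x : ℕ → Z} {n : ℕ} (hn : n ≠ 0)
    {p : Z → ℝ} (hp1 : ∑ z, p z = 1) {ε : ℝ}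
    (h : ε < (1 / 2) * ∑ z, |empiricalFreq x n z - p z|) :
    ∃ A : Finset Z, n * ε ≤ ∑ t ∈ range n, ((A : Set Z).indicator 1 (x t) - ∑ z ∈ A, p z) := by
  set A : Finset Z := {z | 0 ≤ empiricalFreq x n z - p z}
  refine ⟨A, ?_⟩
  have hA : ∑ z ∈ A, (empiricalFreq x n z - p z) = (1 / 2) * ∑ z, |empiricalFreq x n z - p z| :=
    sum_filter_nonneg_eq_half_sum_abs _ _ <| by
      rw [sum_sub_distrib, sum_empiricalFreq x hn, hp1, sub_self]
  rw [sum_sub_distrib, sum_empiricalFreq_finset] at hA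
  have hnR : (0 : ℝ) < n := by positivity
  rw [sum_sub_distrib, sum_const, card_range, nsmul_eq_mul]
  have := mul_lt_mul_of_pos_left (h.trans_eq hA.symm) hnR
  rw [mul_sub, ← mul_assoc, mul_one_div_cancel hnR.ne', one_mul] at this
  exact this.le

end Empirical

lemma measureReal_half_sum_abs_empiricalFreq_sub_gt_le {Ω Z : Type*} [MeasurableSpace Ω]
    [Fintype Z] [DecidableEq Z] [MeasurableSpace Z] [MeasurableSingletonClass Z]
    {μ : Measure Ω} [IsProbabilityMeasure μ] {X : ℕ → Ω → Z} (hmeas : ∀ t, Measurable (X t))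
    (hindep : iIndepFun X μ) {p : Z → ℝ} (hp1 : ∑ z, p z = 1)
    (hlaw : ∀ t z, μ.real (X t ⁻¹' {z}) = p z) {n : ℕ} (hn : n ≠ 0) {ε : ℝ} (hε : 0 ≤ ε) :
    μ.real {ω | ε < (1 / 2) * ∑ z, |empiricalFreq (X · ω) n z - p z|} ≤
      2 ^ Fintype.card Z * exp (-2 * n * ε ^ 2) := by
  let E (A : Finset Z) : Set Ω :=
    {ω | n * ε ≤ ∑ t ∈ range n, ((A : Set Z).indicator 1 (X t ω) - ∑ z ∈ A, p z)}
  have hlawA (A : Finset Z) (t : ℕ) : μ.real (X t ⁻¹' A) = ∑ z ∈ A, p z := by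
    rw [← sum_measureReal_preimage_singleton A fun z _ ↦ hmeas t (measurableSet_singleton z)]
    exact sum_congr rfl fun z _ ↦ hlaw t z
  calc μ.real {ω | ε < (1 / 2) * ∑ z, |empiricalFreq (X · ω) n z - p z|}
      ≤ μ.real (⋃ A ∈ (univ : Finset (Finset Z)), E A) := by
        refine measureReal_mono (fun ω hω ↦ ?_) (measure_ne_top μ _)
        obtain ⟨A, hA⟩ := exists_finset_mul_le_sum_indicator_sub hn hp1 hω
        exact Set.mem_biUnion (mem_univ A) hA
    _ ≤ ∑ A : Finset Z, μ.real (E A) := measureReal_biUnion_finset_le _ _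
    _ ≤ ∑ _A : Finset Z, exp (-2 * n * ε ^ 2) := sum_le_sum fun A _ ↦
        measureReal_sum_indicator_sub_ge_le hmeas hindep A.finite_toSet.measurableSet
          (hlawA A) n hε
    _ = 2 ^ Fintype.card Z * exp (-2 * n * ε ^ 2) := by simp

lemma two_pow_mul_exp_le_of_max_le {K n : ℕ} {ε δ : ℝ} (hε : 0 < ε) (hδ : 0 < δ)
    (hn : max ((K : ℝ) / ε ^ 2) ((2 / ε ^ 2) * log (2 / δ)) ≤ n) :
    2 ^ K * exp (-2 * n * ε ^ 2) ≤ δ := by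
  have hε2 : 0 < ε ^ 2 := by positivity
  have hK : (K : ℝ) ≤ n * ε ^ 2 := (div_le_iff₀ hε2).1 ((le_max_left _ _).trans hn)
  have hL : 2 * log (2 / δ) ≤ n * ε ^ 2 := by
    rw [← div_le_iff₀ hε2, ← div_mul_eq_mul_div]
    exact (le_max_right _ _).trans hn
  rw [log_div two_ne_zero hδ.ne'] at hL
  have hlog2 : log 2 ≤ 1 := by linarith [log_le_sub_one_of_pos two_pos]
  have hKlog2 : K * log 2 ≤ K := mul_le_of_le_one_right K.cast_nonneg hlog2
  rw [← exp_log hδ, ← rpow_natCast, rpow_def_of_pos two_pos, ← exp_add, exp_le_exp]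
  -- for `δ ≥ 1` the bound `K ≤ nε²` suffices, for `δ ≤ 1` the bound on `log (2 / δ)` does
  rcases le_total 0 (log δ) with hlogδ | hlogδ <;> linarith [log_pos one_lt_two]

theorem multinomial_concentration_general {Ω Z : Type*} [MeasurableSpace Ω]
    [Fintype Z] [DecidableEq Z] [MeasurableSpace Z] [MeasurableSingletonClass Z]
    (μ : Measure Ω) [IsProbabilityMeasure μ]
    (p : Z → ℝ) (hp1 : ∑ z, p z = 1)
    (n : ℕ) (X : ℕ → Ω → Z) (hmeas : ∀ t, Measurable (X t))
    (hindep : iIndepFun X μ)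
    (hlaw : ∀ t z, (μ {ω | X t ω = z}).toReal = p z)
    (ε δ : ℝ) (hε : 0 < ε) (hδ : 0 < δ)
    (hn : max ((Fintype.card Z : ℝ) / ε ^ 2) ((2 / ε ^ 2) * Real.log (2 / δ)) ≤ n) :
    (μ {ω | ε < (1 / 2) * ∑ z,
        |(1 / (n : ℝ)) * ∑ t ∈ Finset.range n, (if X t ω = z then (1 : ℝ) else 0) - p z|}).toReal
      ≤ δ := by
  rcases le_or_gt 1 δ with hδ1 | hδ1
  · exact measureReal_le_one.trans hδ1
  have hn0 : n ≠ 0 := by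
    rintro rfl
    have hpos : 0 < (2 / ε ^ 2) * log (2 / δ) :=
      mul_pos (by positivity) (log_pos (by rw [lt_div_iff₀ hδ]; linarith))
    linarith [(le_max_right _ _).trans hn, Nat.cast_zero (R := ℝ)]
  calc _ ≤ 2 ^ Fintype.card Z * exp (-2 * n * ε ^ 2) :=
        measureReal_half_sum_abs_empiricalFreq_sub_gt_le hmeas hindep hp1 hlaw hn0 hε.le
    _ ≤ δ := two_pow_mul_exp_le_of_max_le hε hδ hn

/-- Finite-sample multinomial estimation (Canonne 2020, Theorem 1): if
`n ≥ max(|Z|/ε², (2/ε²)·log(2/δ))`, then the empirical distribution of an i.i.d.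
sample from a pmf `p` on a finite set `Z` is within total variation `ε` of `p`
with probability at least `1 − δ`. -/
theorem multinomial_concentration {Ω Z : Type*} [MeasurableSpace Ω]
    [Fintype Z] [DecidableEq Z] [MeasurableSpace Z] [MeasurableSingletonClass Z]
    (μ : Measure Ω) [IsProbabilityMeasure μ]
    (p : Z → ℝ) (hp0 : ∀ z, 0 ≤ p z) (hp1 : ∑ z, p z = 1)
    (n : ℕ) (X : ℕ → Ω → Z) (hmeas : ∀ t, Measurable (X t))
    (hindep : iIndepFun X μ)
    (hlaw : ∀ t z, (μ {ω | X t ω = z}).toReal = p z)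
    (ε δ : ℝ) (hε : 0 < ε) (hδ : 0 < δ)
    (hn : max ((Fintype.card Z : ℝ) / ε ^ 2) ((2 / ε ^ 2) * Real.log (2 / δ)) ≤ n) :
    (μ {ω | ε < (1 / 2) * ∑ z,
        |(1 / (n : ℝ)) * ∑ t ∈ Finset.range n, (if X t ω = z then (1 : ℝ) else 0) - p z|}).toReal
      ≤ δ :=
  multinomial_concentration_general μ p hp1 n X hmeas hindep hlaw ε δ hε hδ hn
end

section
/- Let 𝒵 be a finite set, (Z_s)_{s=1}^{T} a sequence in 𝒵, and define N_s(z) = max(1, Σ_{j=1}^s 1{Z_j = z}). Then for any 1 ≤ t < t' ≤ T, Σ_{s=t}^{t'} 1/√(N_{s−1}(Z_s)) ≤ √(8|𝒵|(t'−t)). -/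
/-!
Split the window according to the value of the context. If the occurrences of a context `z` in
the window are listed in increasing order, the one of rank `k` has been preceded by at least `k`
occurrences of `z`, so its term is at most `1 / √(max 1 k)`. Comparing with the integral of
`1 / √x` bounds the contribution of `z` by `2 √n_z`, where `n_z` is the number of its occurrences
in the window, and Cauchy–Schwarz gives `∑_z √n_z ≤ √(|𝒵| (t' - t + 1)) ≤ √(2 |𝒵| (t' - t))`.
-/

open Finset

lemma sum_comp_card_filter_lt {α M : Type*} [LinearOrder α] [AddCommMonoid M]
    (A : Finset α) (g : ℕ → M) :
    ∑ a ∈ A, g #{b ∈ A | b < a} = ∑ k ∈ range #A, g k := by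
  induction A using Finset.induction_on_max with
  | empty => simp
  | insert a A hlt ih =>
    have ha : a ∉ A := fun h => (hlt a h).false
    rw [sum_insert ha, card_insert_of_notMem ha, sum_range_succ, add_comm, filter_insert,
      if_neg (lt_irrefl a), filter_true_of_mem hlt, ← ih]
    congr 1
    refine sum_congr rfl fun s hs => ?_
    rw [filter_insert, if_neg (hlt s hs).not_gt]

/-- `x ↦ √(4x - 2)` is a discrete antiderivative of `1 / √x`. -/
lemma one_div_sqrt_le_sqrt_sub_sqrt {x : ℝ} (hx : 1 / 2 ≤ x) :
    1 / √x ≤ √(4 * x + 2) - √(4 * x - 2) := by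
  set a := √(4 * x + 2)
  set b := √(4 * x - 2)
  have ha : a ^ 2 = 4 * x + 2 := Real.sq_sqrt (by linarith)
  have hb : b ^ 2 = 4 * x - 2 := Real.sq_sqrt (by linarith)
  have hx' : √x ^ 2 = x := Real.sq_sqrt (by linarith)
  have hba : b ≤ a := Real.sqrt_le_sqrt (by linarith)
  have hsum : a + b ≤ 4 * √x := by
    have hsq : (a + b) ^ 2 ≤ (4 * √x) ^ 2 := by nlinarith [sq_nonneg (a - b)]
    exact (pow_le_pow_iff_left₀ (by positivity) (by positivity) two_ne_zero).1 hsq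
  rw [div_le_iff₀ (Real.sqrt_pos.2 (by linarith))]
  nlinarith [mul_le_mul_of_nonneg_left hsum (sub_nonneg.2 hba)]

lemma sum_range_one_div_sqrt_max_one_le (m : ℕ) :
    ∑ k ∈ range m, 1 / √((max 1 k : ℕ) : ℝ) ≤ 2 * √(m : ℝ) := by
  have hstep (k : ℕ) :
      1 / √((max 1 k : ℕ) : ℝ) ≤ √(4 * ((k + 1 : ℕ) : ℝ) - 2) - √(4 * (k : ℝ) - 2) := by
    rcases Nat.eq_zero_or_pos k with rfl | hk
    -- `√(-2) = 0` in Lean, so the first term only has to be at most `√2`.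
    · norm_num [Real.sqrt_eq_zero_of_nonpos]
    · have hk' : (1 : ℝ) ≤ k := by exact_mod_cast hk
      rw [max_eq_right hk]
      convert one_div_sqrt_le_sqrt_sub_sqrt (x := k) (by linarith) using 3
      push_cast
      ring
  calc ∑ k ∈ range m, 1 / √((max 1 k : ℕ) : ℝ)
      ≤ ∑ k ∈ range m, (√(4 * ((k + 1 : ℕ) : ℝ) - 2) - √(4 * (k : ℝ) - 2)) :=
        sum_le_sum fun k _ => hstep k
    _ = √(4 * (m : ℝ) - 2) := by
        rw [sum_range_sub (fun k : ℕ => √(4 * (k : ℝ) - 2))]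
        norm_num [Real.sqrt_eq_zero_of_nonpos]
    _ ≤ √(2 ^ 2 * m) := Real.sqrt_le_sqrt (by linarith)
    _ = 2 * √(m : ℝ) := by rw [Real.sqrt_mul (by positivity), Real.sqrt_sq zero_le_two]

lemma sum_one_div_sqrt_max_one_le_of_card_filter_lt_le {α : Type*} [LinearOrder α]
    (A : Finset α) (c : α → ℕ) (hc : ∀ a ∈ A, #{b ∈ A | b < a} ≤ c a) :
    ∑ a ∈ A, 1 / √((max 1 (c a) : ℕ) : ℝ) ≤ 2 * √(#A : ℝ) := by
  calc ∑ a ∈ A, 1 / √((max 1 (c a) : ℕ) : ℝ)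
      ≤ ∑ a ∈ A, 1 / √((max 1 #{b ∈ A | b < a} : ℕ) : ℝ) := by
        refine sum_le_sum fun a ha => one_div_le_one_div_of_le (by positivity) ?_
        gcongr
        exact hc a ha
    _ = ∑ k ∈ range #A, 1 / √((max 1 k : ℕ) : ℝ) :=
        sum_comp_card_filter_lt A fun k => 1 / √((max 1 k : ℕ) : ℝ)
    _ ≤ 2 * √(#A : ℝ) := sum_range_one_div_sqrt_max_one_le #A

lemma sum_sqrt_card_fiber_le {ι κ : Type*} [Fintype κ] [DecidableEq κ]
    (s : Finset ι) (f : ι → κ) :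
    ∑ z, √(#{i ∈ s | f i = z} : ℝ) ≤ √(Fintype.card κ * #s : ℝ) := by
  have h := Real.sum_sqrt_mul_sqrt_le univ (f := fun _ : κ => (1 : ℝ))
    (g := fun z => (#{i ∈ s | f i = z} : ℝ)) (fun _ => zero_le_one) (fun _ => by positivity)
  rw [Real.sqrt_mul (by positivity)]
  simpa only [Real.sqrt_one, one_mul, sum_const, card_univ, nsmul_eq_mul, mul_one,
    ← Nat.cast_sum, ← card_eq_sum_card_fiberwise fun i _ => mem_univ (f i)] using h

lemma card_Icc_le_two_mul_sub {t t' : ℕ} (htt' : t < t') :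
    (#(Icc t t') : ℝ) ≤ 2 * ((t' : ℝ) - t) := by
  rw [Nat.card_Icc, Nat.cast_sub (by omega)]
  have : (t : ℝ) + 1 ≤ t' := by exact_mod_cast htt'
  push_cast
  linarith

theorem accumulated_contexts_general {𝒵 : Type*} [Fintype 𝒵] [DecidableEq 𝒵]
    (Z : ℕ → 𝒵) (N : ℕ → 𝒵 → ℕ)
    (hN : ∀ s z, N s z = max 1 (∑ j ∈ Finset.Icc 1 s, if Z j = z then 1 else 0))
    (t t' : ℕ) (ht : 1 ≤ t) (htt' : t < t') :
    ∑ s ∈ Finset.Icc t t', (1 : ℝ) / Real.sqrt (N (s - 1) (Z s)) ≤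
      Real.sqrt (8 * (Fintype.card 𝒵 : ℝ) * ((t' : ℝ) - (t : ℝ))) := by
  set W := Icc t t'
  have hprior (z : 𝒵) : ∀ s ∈ {s ∈ W | Z s = z},
      #{b ∈ {s ∈ W | Z s = z} | b < s} ≤ #{j ∈ Icc 1 (s - 1) | Z j = z} := by
    intro s _
    refine card_le_card fun b hb => ?_
    simp only [W, mem_filter, mem_Icc] at hb ⊢
    obtain ⟨⟨⟨htb, -⟩, hZb⟩, hbs⟩ := hb
    exact ⟨⟨by omega, by omega⟩, hZb⟩
  calc ∑ s ∈ W, 1 / √(N (s - 1) (Z s) : ℝ)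
      = ∑ z, ∑ s ∈ {s ∈ W | Z s = z},
          1 / √((max 1 #{j ∈ Icc 1 (s - 1) | Z j = z} : ℕ) : ℝ) := by
        rw [← sum_fiberwise W Z]
        refine sum_congr rfl fun z _ => sum_congr rfl fun s hs => ?_
        rw [hN, (mem_filter.1 hs).2, card_filter]
    _ ≤ ∑ z, 2 * √(#{s ∈ W | Z s = z} : ℝ) :=
        sum_le_sum fun z _ => sum_one_div_sqrt_max_one_le_of_card_filter_lt_le _ _ (hprior z)
    _ ≤ 2 * √(Fintype.card 𝒵 * #W : ℝ) := by
        rw [← mul_sum]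
        gcongr
        exact sum_sqrt_card_fiber_le W Z
    _ ≤ √(8 * (Fintype.card 𝒵 : ℝ) * ((t' : ℝ) - (t : ℝ))) := by
        rw [show (2 : ℝ) = √(2 ^ 2) by simp, ← Real.sqrt_mul (by positivity)]
        apply Real.sqrt_le_sqrt
        nlinarith [card_Icc_le_two_mul_sub htt', (Fintype.card 𝒵).cast_nonneg (α := ℝ)]

/-- Accumulated context-count bound: for contexts `Z_s` in a finite set with
counts `N_s z = max 1 (#{s' ≤ s : Z_{s'} = z})`, the sum of inverse square-root
counts over a window is at most `√(8|𝒵|(t'−t))`. -/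
theorem accumulated_contexts {𝒵 : Type*} [Fintype 𝒵] [DecidableEq 𝒵]
    (T : ℕ) (Z : ℕ → 𝒵) (N : ℕ → 𝒵 → ℕ)
    (hN : ∀ s z, N s z = max 1 (∑ j ∈ Finset.Icc 1 s, if Z j = z then 1 else 0))
    (t t' : ℕ) (ht : 1 ≤ t) (htt' : t < t') (ht' : t' ≤ T) :
    ∑ s ∈ Finset.Icc t t', (1 : ℝ) / Real.sqrt (N (s - 1) (Z s)) ≤
      Real.sqrt (8 * (Fintype.card 𝒵 : ℝ) * ((t' : ℝ) - (t : ℝ))) :=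
  accumulated_contexts_general Z N hN t t' ht htt'
end

section
/- Let ν and ν' be two families of distributions on a measurable space indexed by a finite action set 𝒜, and let π be a (possibly history-dependent) policy over T rounds. Then the KL divergence between the laws of the T-round history (A_t, X_t)_{t∈[T]} generated under (ν, π) and (ν', π) satisfies KL(P_{ν,π} ‖ P_{ν',π}) = Σ_{a∈𝒜} E_{ν,π}[N_T(a)] · KL(ν_a ‖ ν'_a), where N_T(a) is the number of rounds on which action a is played. -/
/-!
The likelihood ratio of a history factorises over rounds and the policy factors cancel, so the
log-likelihood ratio is the additive functional `∑ t, log (ν_{A_t}(X_t) / ν'_{A_t}(X_t))`.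
Peeling off the last round shows that the expectation of any additive functional `∑ t, F (A_t, X_t)`
is unchanged when `F (a, x)` is replaced by its mean `∑ x, ν a x * F (a, x)`, which here is
`KL(ν_a ‖ ν'_a)`; grouping the rounds by action then produces the counts `N_T(a)`.
-/

open Finset

variable {α X : Type*}

/-- Pointwise KL term with the convention that `p = 0` contributes `0`. -/
noncomputable def klTerm (p q : ℝ) : ℝ :=
  if p = 0 then 0 else p * Real.log (p / q)

/-- KL divergence between two pmfs on a finite set. -/
noncomputable def klPmf [Fintype X] (ν ν' : X → ℝ) : ℝ :=
  ∑ x, klTerm (ν x) (ν' x)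

/-- The probability of a `T`-round history `h` under environment `ν` (per-action
observation pmfs) and history-dependent policy `π`. -/
def histProb [Fintype α] [Fintype X] (T : ℕ)
    (π : (t : ℕ) → (Fin t → α × X) → α → ℝ) (ν : α → X → ℝ)
    (h : Fin T → α × X) : ℝ :=
  ∏ t : Fin T,
    π t.1 (fun s : Fin t.1 => h ⟨s.1, s.2.trans t.2⟩) (h t).1 * ν (h t).1 (h t).2

/-- The number of rounds among the `T`-round history `h` on which action `a` is played. -/
def numPlays [Fintype α] [Fintype X] [DecidableEq α] (T : ℕ)
    (h : Fin T → α × X) (a : α) : ℕ :=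
  (Finset.univ.filter fun t : Fin T => (h t).1 = a).card


section History

variable [Fintype α] [Fintype X] {T : ℕ} {π : (t : ℕ) → (Fin t → α × X) → α → ℝ}
  {ν : α → X → ℝ}

lemma histProb_snoc (h : Fin T → α × X) (y : α × X) :
    histProb (T + 1) π ν (Fin.snoc h y) = histProb T π ν h * (π T h y.1 * ν y.1 y.2) := by
  have snoc_lt (m : ℕ) (hm : m < T) (hm' : m < T + 1) :
      Fin.snoc (α := fun _ => α × X) h y ⟨m, hm'⟩ = h ⟨m, hm⟩ := by
    simp [Fin.snoc, hm]
  simp only [histProb, Fin.prod_univ_castSucc, Fin.snoc_castSucc, Fin.snoc_last, Fin.val_castSucc,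
    Fin.val_last]
  congr 1
  · refine prod_congr rfl fun t _ => ?_
    congr 2
    funext s
    exact snoc_lt _ (s.2.trans t.2) _
  · congr 2
    funext s
    exact snoc_lt _ s.2 _

variable (hπ1 : ∀ t hist, ∑ a, π t hist a = 1) (hν1 : ∀ a, ∑ x, ν a x = 1)
include hπ1 hν1

lemma sum_histProb_snoc (h : Fin T → α × X) :
    ∑ y, histProb (T + 1) π ν (Fin.snoc h y) = histProb T π ν h := by
  simp [histProb_snoc, ← mul_sum, Fintype.sum_prod_type, hν1, hπ1]

lemma sum_histProb_succ_mul_sum (F : α × X → ℝ) :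
    ∑ h : Fin (T + 1) → α × X, histProb (T + 1) π ν h * ∑ t, F (h t) =
      ∑ h : Fin T → α × X, histProb T π ν h *
        (∑ t, F (h t) + ∑ y, π T h y.1 * ν y.1 y.2 * F y) := by
  rw [← (Fin.snocEquiv fun _ => α × X).sum_comp, Fintype.sum_prod_type_right]
  refine sum_congr rfl fun h _ => ?_
  have hsplit (y : α × X) :
      ∑ t, F (Fin.snoc (α := fun _ => α × X) h y t) = ∑ t, F (h t) + F y := by
    simp [Fin.sum_univ_castSucc]
  simp only [Fin.snocEquiv, Equiv.coe_fn_mk, hsplit, mul_add, sum_add_distrib]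
  rw [← sum_mul, sum_histProb_snoc hπ1 hν1]
  simp only [histProb_snoc, mul_sum, mul_assoc]

lemma sum_histProb_mul_sum_eq_sum_mean (F : α × X → ℝ) :
    ∑ h : Fin T → α × X, histProb T π ν h * ∑ t, F (h t) =
      ∑ h : Fin T → α × X, histProb T π ν h * ∑ t, ∑ x, ν (h t).1 x * F ((h t).1, x) := by
  induction T with
  | zero => simp
  | succ T ih =>
    rw [sum_histProb_succ_mul_sum hπ1 hν1,
      sum_histProb_succ_mul_sum hπ1 hν1 fun y => ∑ x, ν y.1 x * F (y.1, x)]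
    simp only [mul_add, sum_add_distrib, ih]
    congr 1
    refine sum_congr rfl fun h _ => ?_
    simp only [Fintype.sum_prod_type, mul_assoc, ← mul_sum, ← sum_mul, hν1, one_mul]

end History

-- The `p = 0` branch of `klTerm` is redundant because `Real.log 0 = 0`.
lemma klTerm_eq_mul_log (p q : ℝ) : klTerm p q = p * Real.log (p / q) := by
  unfold klTerm
  split_ifs with hp <;> simp [hp]

lemma klTerm_histProb [Fintype α] [Fintype X] {T : ℕ} {π : (t : ℕ) → (Fin t → α × X) → α → ℝ}
    {ν ν' : α → X → ℝ} (hac : ∀ a x, ν' a x = 0 → ν a x = 0) (h : Fin T → α × X) :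
    klTerm (histProb T π ν h) (histProb T π ν' h) =
      histProb T π ν h * ∑ t, Real.log (ν (h t).1 (h t).2 / ν' (h t).1 (h t).2) := by
  rw [klTerm_eq_mul_log]
  rcases eq_or_ne (histProb T π ν h) 0 with hP | hP
  · simp [hP]
  have hfac (t : Fin T) := mul_ne_zero_iff.1 (prod_ne_zero_iff.1 hP t (mem_univ t))
  have hratio : histProb T π ν h / histProb T π ν' h =
      ∏ t, ν (h t).1 (h t).2 / ν' (h t).1 (h t).2 := by
    rw [histProb, histProb, ← prod_div_distrib]
    exact prod_congr rfl fun t _ => mul_div_mul_left _ _ (hfac t).1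
  rw [hratio, Real.log_prod fun t _ => div_ne_zero (hfac t).2 fun h0 => (hfac t).2 (hac _ _ h0)]

lemma sum_numPlays_mul {R : Type*} [CommSemiring R] [Fintype α] [Fintype X] [DecidableEq α]
    {T : ℕ} (h : Fin T → α × X) (K : α → R) :
    ∑ a, (numPlays T h a : R) * K a = ∑ t, K (h t).1 := by
  rw [← sum_fiberwise univ (fun t => (h t).1) (fun t => K (h t).1)]
  refine sum_congr rfl fun a _ => ?_
  rw [sum_congr rfl fun t ht => by rw [(mem_filter.1 ht).2], sum_const, nsmul_eq_mul, numPlays]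

theorem divergence_decomposition_general [Fintype α] [Fintype X] [DecidableEq α]
    (T : ℕ) (π : (t : ℕ) → (Fin t → α × X) → α → ℝ) (ν ν' : α → X → ℝ)
    (hπ1 : ∀ t hist, ∑ a, π t hist a = 1)
    (hν1 : ∀ a, ∑ x, ν a x = 1)
    (hac : ∀ a x, ν' a x = 0 → ν a x = 0) :
    ∑ h : Fin T → α × X, klTerm (histProb T π ν h) (histProb T π ν' h) =
      ∑ a, (∑ h : Fin T → α × X, histProb T π ν h * (numPlays T h a : ℝ)) *
        klPmf (ν a) (ν' a) := by
  calc ∑ h : Fin T → α × X, klTerm (histProb T π ν h) (histProb T π ν' h)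
      = ∑ h : Fin T → α × X, histProb T π ν h *
          ∑ t, Real.log (ν (h t).1 (h t).2 / ν' (h t).1 (h t).2) :=
        sum_congr rfl fun h _ => klTerm_histProb hac h
    _ = ∑ h : Fin T → α × X, histProb T π ν h * ∑ t, klPmf (ν (h t).1) (ν' (h t).1) := by
        rw [sum_histProb_mul_sum_eq_sum_mean hπ1 hν1 fun y => Real.log (ν y.1 y.2 / ν' y.1 y.2)]
        simp only [klPmf, klTerm_eq_mul_log]
    _ = _ := by
        simp_rw [← sum_numPlays_mul _ fun a => klPmf (ν a) (ν' a), mul_sum, sum_mul, mul_assoc]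
        exact sum_comm

/-- Divergence decomposition for bandits (Lemma 15.1 of Lattimore–Szepesvári): the KL
divergence between the `T`-round history laws under `(ν, π)` and `(ν', π)` equals
`Σ_a E_{ν,π}[N_T(a)] · KL(ν_a ‖ ν'_a)`. -/
theorem divergence_decomposition [Fintype α] [Fintype X] [DecidableEq α]
    (T : ℕ) (π : (t : ℕ) → (Fin t → α × X) → α → ℝ) (ν ν' : α → X → ℝ)
    (hπ0 : ∀ t hist a, 0 ≤ π t hist a) (hπ1 : ∀ t hist, ∑ a, π t hist a = 1)
    (hν0 : ∀ a x, 0 ≤ ν a x) (hν1 : ∀ a, ∑ x, ν a x = 1)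
    (hν'0 : ∀ a x, 0 ≤ ν' a x) (hν'1 : ∀ a, ∑ x, ν' a x = 1)
    (hac : ∀ a x, ν' a x = 0 → ν a x = 0) :
    ∑ h : Fin T → α × X, klTerm (histProb T π ν h) (histProb T π ν' h) =
      ∑ a, (∑ h : Fin T → α × X, histProb T π ν h * (numPlays T h a : ℝ)) *
        klPmf (ν a) (ν' a) :=
  divergence_decomposition_general T π ν ν' hπ1 hν1 hac
end
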